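/- arXiv:2008.00538 — 9 statements merged into one kernel-verified Lean document; each statement's English description precedes it below -/
import Mathlib

section
/- Let F(X) = X^d + a_1 X^{d-1} + ... + a_d ∈ Z[X] be monic, α the class of X in R = Z[X]/(F), m a positive integer and μ an integer. Then the Z-submodule I of R spanned by α^{d-1} - μ^{d-1}, ..., α - μ, and m is an ideal of R if and only if F(μ) ≡ 0 (mod m). -/
/-!
Since `α (α^j - μ^j) = (α^(j+1) - μ^(j+1)) - μ^j (α - μ)` and `α m = m (α - μ) + μ m`, the span `I`
is stable under multiplication by `α` exactly when `α^d - μ^d ∈ I`. As `F(α) = 0`, expanding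
`F(α) - F(μ)` in the differences `α^j - μ^j` shows `α^d - μ^d ≡ -F(μ)` modulo `I`. Finally, the
`ℤ`-linear functional `R → ℤ` sending the class of `p` to `(p mod F)(μ)` kills every `α^j - μ^j`
with `j < d` and fixes the integers, so an integer lies in `I` iff `m` divides it.
-/

open Polynomial Finset

section

variable {S : Type*} [CommRing S]

def powSubPowSpan (x : S) (μ m : ℤ) (n : ℕ) : Submodule ℤ S :=
  Submodule.span ℤ ({(m : S)} ∪ (fun j : ℕ => x ^ j - (μ : S) ^ j) '' Set.Ico 1 n)

variable {x : S} {μ m : ℤ} {n : ℕ}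

theorem intCast_mem_powSubPowSpan : (m : S) ∈ powSubPowSpan x μ m n :=
  Submodule.subset_span (Or.inl rfl)

theorem pow_sub_pow_mem_powSubPowSpan {j : ℕ} (h1 : 1 ≤ j) (hn : j < n) :
    x ^ j - (μ : S) ^ j ∈ powSubPowSpan x μ m n :=
  Submodule.subset_span (Or.inr ⟨j, ⟨h1, hn⟩, rfl⟩)

theorem mul_mem_powSubPowSpan_iff (hn : 1 < n) :
    (∀ y ∈ powSubPowSpan x μ m n, x * y ∈ powSubPowSpan x μ m n) ↔
      x ^ n - (μ : S) ^ n ∈ powSubPowSpan x μ m n := by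
  set J := powSubPowSpan x μ m n
  have hx : x ^ 1 - (μ : S) ^ 1 ∈ J := pow_sub_pow_mem_powSubPowSpan le_rfl hn
  have hmul (j : ℕ) : x * (x ^ j - (μ : S) ^ j) =
      (x ^ (j + 1) - (μ : S) ^ (j + 1)) - (μ ^ j : ℤ) • (x ^ 1 - (μ : S) ^ 1) := by
    rw [zsmul_eq_mul]; push_cast; ring
  constructor
  · intro hJ
    obtain ⟨k, rfl⟩ : ∃ k, n = k + 1 := ⟨n - 1, by omega⟩
    have hk := hJ _ (pow_sub_pow_mem_powSubPowSpan (by omega) (Nat.lt_succ_self k))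
    rwa [hmul, Submodule.sub_mem_iff_left J (J.smul_mem _ hx)] at hk
  · intro hpow y hy
    suffices J ≤ J.comap (LinearMap.mulLeft ℤ x) from this hy
    refine Submodule.span_le.mpr ?_
    rintro _ (rfl | ⟨j, ⟨hj1, hjn⟩, rfl⟩)
    · have hxm : x * (m : S) = m • (x ^ 1 - (μ : S) ^ 1) + μ • (m : S) := by
        simp only [zsmul_eq_mul]; ring
      show x * (m : S) ∈ J
      rw [hxm]
      exact add_mem (J.smul_mem _ hx) (J.smul_mem _ intCast_mem_powSubPowSpan)
    · show x * _ ∈ J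
      rw [hmul]
      refine sub_mem ?_ (J.smul_mem _ hx)
      rcases (show j + 1 ≤ n by omega).eq_or_lt with rfl | h
      · exact hpow
      · exact pow_sub_pow_mem_powSubPowSpan (by omega) h

theorem Polynomial.Monic.aeval_sub_intCast_eval {P : ℤ[X]} (hP : P.Monic) (x : S) (μ : ℤ) :
    aeval x P - ((P.eval μ : ℤ) : S) = (x ^ P.natDegree - (μ : S) ^ P.natDegree) +
      ∑ i ∈ range P.natDegree, P.coeff i • (x ^ i - (μ : S) ^ i) := by
  conv_lhs => rw [hP.as_sum]
  simp [eval_finsetSum, zsmul_eq_mul, mul_sub, sum_sub_distrib]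
  ring

theorem pow_natDegree_sub_pow_mem_powSubPowSpan_iff {P : ℤ[X]} (hP : P.Monic)
    (hx : aeval x P = 0) :
    x ^ P.natDegree - (μ : S) ^ P.natDegree ∈ powSubPowSpan x μ m P.natDegree ↔
      ((P.eval μ : ℤ) : S) ∈ powSubPowSpan x μ m P.natDegree := by
  set J := powSubPowSpan x μ m P.natDegree
  have hsum : ∑ i ∈ range P.natDegree, P.coeff i • (x ^ i - (μ : S) ^ i) ∈ J := by
    refine J.sum_mem fun i hi => J.smul_mem _ ?_
    rcases Nat.eq_zero_or_pos i with rfl | hi0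
    · simp
    · exact pow_sub_pow_mem_powSubPowSpan hi0 (mem_range.mp hi)
  have hroot := hP.aeval_sub_intCast_eval x μ
  rw [hx] at hroot
  rw [show x ^ P.natDegree - (μ : S) ^ P.natDegree = -((P.eval μ : ℤ) : S) -
      ∑ i ∈ range P.natDegree, P.coeff i • (x ^ i - (μ : S) ^ i) by linear_combination -hroot,
    Submodule.sub_mem_iff_left J hsum, neg_mem_iff]

end

theorem AdjoinRoot.intCast_mem_powSubPowSpan_iff {F : ℤ[X]} (hF : F.Monic) (hF0 : 0 < F.natDegree)
    {μ m c : ℤ} : (c : AdjoinRoot F) ∈ powSubPowSpan (root F) μ m F.natDegree ↔ m ∣ c := by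
  constructor
  · intro hc
    let L : AdjoinRoot F →ₗ[ℤ] ℤ := (leval μ).comp (modByMonicHom hF)
    have hL (p : ℤ[X]) (hp : p.natDegree < F.natDegree) : L (mk F p) = p.eval μ := by
      simp [L, modByMonicHom_mk, (modByMonic_eq_self_iff hF).2 (degree_lt_degree hp)]
    have hLc (c : ℤ) : L c = c := by
      simpa using hL (C c) (by rwa [natDegree_C])
    have hJ : powSubPowSpan (root F) μ m F.natDegree ≤ Submodule.comap L (Ideal.span {m}) := by
      refine Submodule.span_le.mpr ?_
      rintro _ (rfl | ⟨j, ⟨-, hjn⟩, rfl⟩)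
      · simp [hLc]
      · have hmk : root F ^ j - (μ : AdjoinRoot F) ^ j = mk F (X ^ j - C (μ ^ j)) := by simp
        simp only [SetLike.mem_coe, Submodule.mem_comap, hmk]
        rw [hL _ (by rwa [natDegree_X_pow_sub_C])]
        simp
    simpa [hLc, Ideal.mem_span_singleton] using hJ hc
  · rintro ⟨k, rfl⟩
    rw [show ((m * k : ℤ) : AdjoinRoot F) = k • (m : AdjoinRoot F) by push_cast [zsmul_eq_mul]; ring]
    exact Submodule.smul_mem _ _ intCast_mem_powSubPowSpan

theorem stmt1_general (d : ℕ) (hd : 2 ≤ d) (F : Polynomial ℤ) (hF : F.Monic)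
    (hdeg : F.natDegree = d) (m μ : ℤ)
    (I : Submodule ℤ (AdjoinRoot F))
    (hI : I = Submodule.span ℤ
      ({((m : ℤ) : AdjoinRoot F)} ∪
        (fun j : ℕ => AdjoinRoot.root F ^ j - (μ : AdjoinRoot F) ^ j) '' Set.Ico 1 d)) :
    (∀ x ∈ I, AdjoinRoot.root F * x ∈ I) ↔ m ∣ F.eval μ := by
  obtain rfl : I = powSubPowSpan (AdjoinRoot.root F) μ m F.natDegree := hdeg ▸ hI
  rw [mul_mem_powSubPowSpan_iff (by omega),
    pow_natDegree_sub_pow_mem_powSubPowSpan_iff hF (by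
      -- `aeval` here uses the canonical `ℤ`-algebra structure, not `AdjoinRoot.instAlgebra`.
      rw [aeval_def, algebraMap_int_eq, RingHom.ext_int (Int.castRingHom _) (AdjoinRoot.of F)]
      exact AdjoinRoot.eval₂_root F),
    AdjoinRoot.intCast_mem_powSubPowSpan_iff hF (by omega)]

/-- The ℤ-span of `α^(d-1) - μ^(d-1), …, α - μ, m` in
`R = ℤ[X]/(F)` is an ideal of `R` if and only if `F(μ) ≡ 0 (mod m)`. -/
theorem stmt1 (d : ℕ) (hd : 2 ≤ d) (F : Polynomial ℤ) (hF : F.Monic)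
    (hdeg : F.natDegree = d) (m μ : ℤ) (hm : 0 < m)
    (I : Submodule ℤ (AdjoinRoot F))
    (hI : I = Submodule.span ℤ
      ({((m : ℤ) : AdjoinRoot F)} ∪
        (fun j : ℕ => AdjoinRoot.root F ^ j - (μ : AdjoinRoot F) ^ j) '' Set.Ico 1 d)) :
    (∀ x ∈ I, AdjoinRoot.root F * x ∈ I) ↔ m ∣ F.eval μ :=
  stmt1_general d hd F hF hdeg m μ I hI
end

section
/- Let F be a monic degree-d polynomial over Z, α the class of X in R = Z[X]/(F), m > 0 and F(μ) ≡ 0 (mod m), and let I be the ideal of R spanned over Z by α^{d-1} − μ^{d-1}, ..., α − μ, m. Then the quotient R/I is a cyclic group isomorphic to Z/mZ. -/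
/-!
Reduction modulo `m` composed with `α ↦ μ` is a well-defined ring map `φ : R → ℤ/mℤ`, since
`F(μ) ≡ 0 (mod m)`; it is surjective and kills `I`. Conversely, `R` is spanned over `ℤ` by
`1, α, …, α^(d-1)`, and `α^j ≡ μ^j (mod I)`, so every `x ∈ R` is congruent to an integer `n`
modulo `I`; if `φ x = 0` then `m ∣ n`, whence `n ∈ I` and `x ∈ I`. Thus `ker φ = I`.
-/

open Polynomial

lemma Polynomial.eval₂_intCastRingHom_eq_zero {m : ℕ} {F : ℤ[X]} {μ : ℤ}
    (h : (m : ℤ) ∣ F.eval μ) : F.eval₂ (Int.castRingHom (ZMod m)) μ = 0 := by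
  rw [eval₂_at_intCast, eq_intCast, ZMod.intCast_zmod_eq_zero_iff_dvd]
  exact h

namespace AdjoinRoot

noncomputable def evalZMod {m : ℕ} {F : ℤ[X]} {μ : ℤ} (h : (m : ℤ) ∣ F.eval μ) :
    AdjoinRoot F →+* ZMod m :=
  lift (Int.castRingHom (ZMod m)) μ (eval₂_intCastRingHom_eq_zero h)

lemma evalZMod_root {m : ℕ} {F : ℤ[X]} {μ : ℤ} (h : (m : ℤ) ∣ F.eval μ) :
    evalZMod h (root F) = μ := by
  simp only [evalZMod, lift_root]

lemma span_root_pow_eq_top {F : ℤ[X]} (hF : F.Monic) :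
    Submodule.span ℤ (Set.range fun i : Fin F.natDegree => root F ^ (i : ℕ)) = ⊤ := by
  have := (powerBasis' hF).basis.span_eq
  rwa [PowerBasis.coe_basis, powerBasis'_gen, powerBasis'_dim] at this

end AdjoinRoot

lemma Submodule.exists_intCast_sub_mem_of_span_eq_top {R : Type*} [Ring R] {s : Set R}
    (hs : Submodule.span ℤ s = ⊤) {I : Submodule ℤ R} (h : ∀ y ∈ s, ∃ n : ℤ, y - n ∈ I)
    (x : R) : ∃ n : ℤ, x - n ∈ I := by
  induction (hs ▸ Submodule.mem_top : x ∈ Submodule.span ℤ s) using Submodule.span_induction with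
  | mem y hy => exact h y hy
  | zero => exact ⟨0, by simp⟩
  | add y z _ _ hy hz =>
    obtain ⟨a, ha⟩ := hy
    obtain ⟨b, hb⟩ := hz
    exact ⟨a + b, by simpa [add_sub_add_comm] using I.add_mem ha hb⟩
  | smul k y _ hy =>
    obtain ⟨a, ha⟩ := hy
    exact ⟨k * a, by simpa [zsmul_eq_mul, mul_sub] using I.smul_mem k ha⟩

lemma RingHom.ker_toIntLinearMap_eq {R : Type*} [Ring R] {m : ℕ} (f : R →+* ZMod m)
    {I : Submodule ℤ R} (hfI : I ≤ LinearMap.ker f.toIntAlgHom.toLinearMap) (hmI : (m : R) ∈ I)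
    (hI : ∀ x : R, ∃ n : ℤ, x - n ∈ I) :
    LinearMap.ker f.toIntAlgHom.toLinearMap = I := by
  refine le_antisymm (fun x hx => ?_) hfI
  obtain ⟨n, hn⟩ := hI x
  have hfn : (n : ZMod m) = 0 := by
    have hfx : f x = 0 := hx
    simpa [hfx] using hfI hn
  obtain ⟨k, rfl⟩ := (ZMod.intCast_zmod_eq_zero_iff_dvd n m).1 hfn
  have hkm : (((m : ℤ) * k : ℤ) : R) ∈ I := by
    simpa [zsmul_eq_mul, mul_comm] using I.smul_mem k hmI
  simpa using I.add_mem hn hkm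

lemma RingHom.nonempty_quotient_addEquiv_zmod {R : Type*} [Ring R] {m : ℕ} (f : R →+* ZMod m)
    {I : Submodule ℤ R} (h : LinearMap.ker f.toIntAlgHom.toLinearMap = I) :
    Nonempty ((R ⧸ I) ≃+ ZMod m) := by
  subst h
  exact ⟨(f.toIntAlgHom.toLinearMap.quotKerEquivOfSurjective
    (ZMod.ringHom_surjective f)).toAddEquiv⟩

theorem stmt2_general (d : ℕ) (F : Polynomial ℤ) (hF : F.Monic) (hdeg : F.natDegree = d)
    (m : ℕ) (μ : ℤ) (hroot : (m : ℤ) ∣ F.eval μ)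
    (I : Submodule ℤ (AdjoinRoot F))
    (hI : I = Submodule.span ℤ
      ({((m : ℤ) : AdjoinRoot F)} ∪
        (fun j : ℕ => AdjoinRoot.root F ^ j - (μ : AdjoinRoot F) ^ j) '' Set.Ico 1 d)) :
    Nonempty ((AdjoinRoot F ⧸ I) ≃+ ZMod m) := by
  set φ := AdjoinRoot.evalZMod hroot
  have hmI : ((m : ℤ) : AdjoinRoot F) ∈ I := hI ▸ Submodule.subset_span (Or.inl rfl)
  have hφI : I ≤ LinearMap.ker φ.toIntAlgHom.toLinearMap := by
    rw [hI, Submodule.span_le]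
    rintro _ (rfl | ⟨j, -, rfl⟩) <;> simp [φ, AdjoinRoot.evalZMod_root]
  have hpow : ∀ y ∈ Set.range fun i : Fin F.natDegree => AdjoinRoot.root F ^ (i : ℕ),
      ∃ n : ℤ, y - n ∈ I := by
    rintro _ ⟨⟨j, hj⟩, rfl⟩
    refine ⟨μ ^ j, ?_⟩
    rcases Nat.eq_zero_or_pos j with rfl | hj0
    · simp
    · exact hI ▸ Submodule.subset_span (Or.inr ⟨j, ⟨hj0, hdeg ▸ hj⟩, by push_cast; rfl⟩)
  exact φ.nonempty_quotient_addEquiv_zmod (φ.ker_toIntLinearMap_eq hφI (mod_cast hmI)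
    (Submodule.exists_intCast_sub_mem_of_span_eq_top (AdjoinRoot.span_root_pow_eq_top hF) hpow))

/-- If `F(μ) ≡ 0 (mod m)` then the quotient of `R = ℤ[X]/(F)`
by the ideal spanned over ℤ by `α^(d-1) - μ^(d-1), …, α - μ, m` is a cyclic
group isomorphic to `ℤ/mℤ`. -/
theorem stmt2 (d : ℕ) (F : Polynomial ℤ) (hF : F.Monic) (hdeg : F.natDegree = d)
    (m : ℕ) (hm : 0 < m) (μ : ℤ) (hroot : (m : ℤ) ∣ F.eval μ)
    (I : Submodule ℤ (AdjoinRoot F))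
    (hI : I = Submodule.span ℤ
      ({((m : ℤ) : AdjoinRoot F)} ∪
        (fun j : ℕ => AdjoinRoot.root F ^ j - (μ : AdjoinRoot F) ^ j) '' Set.Ico 1 d)) :
    Nonempty ((AdjoinRoot F ⧸ I) ≃+ ZMod m) :=
  stmt2_general d F hF hdeg m μ hroot I hI
end

section
/- Let F be a monic polynomial of degree d over Z, α the class of X in R = Z[X]/(F), and let I be an ideal of R of finite index such that R/I is a cyclic group. Then there exist a unique positive integer m and a unique residue class μ mod m with F(μ) ≡ 0 (mod m) such that I equals the Z-span of α^{d-1} − μ^{d-1}, ..., α − μ, and m. -/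
/-!
Since `R/I` is a finite cyclic group, `1` generates it additively, so every class is an integer:
`R/I` has characteristic `n = |R/I|` and `α ≡ μ` modulo `I` for some `μ ∈ ℤ`. For any ring map
`f : R → S` into a ring of characteristic `n` with `f α = μ`, the kernel is the span of `n` and the
`α^j - μ^j`: writing `x = ∑_{j<d} c_j α^j`, `x` differs from the integer `∑ c_j μ^j` by a
combination of the `α^j - μ^j`, and that integer is killed by `f` exactly when `n` divides it.
For uniqueness, the span attached to `(m, μ)` is the kernel of the surjection `R → ℤ/m`,
`α ↦ μ`, so `m = |R/I|`, and `α - μ ∈ I` pins down `μ` modulo `m`.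
-/

/-- The ℤ-submodule of `ℤ[X]/(F)` spanned by `α^j - μ^j` for `1 ≤ j < d`
together with `m`, associated to a root `μ mod m` of `F`. -/
noncomputable def rootSpan (F : Polynomial ℤ) (d : ℕ) (m μ : ℤ) : Submodule ℤ (AdjoinRoot F) :=
  Submodule.span ℤ
    ({(m : AdjoinRoot F)} ∪
      (fun j : ℕ => AdjoinRoot.root F ^ j - (μ : AdjoinRoot F) ^ j) '' Set.Ico 1 d)

theorem intCast_surjective_of_isAddCyclic (Q : Type*) [Ring Q] [Finite Q] [IsAddCyclic Q] :
    Function.Surjective (Int.cast : ℤ → Q) := by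
  have hexp : AddMonoid.exponent Q ∣ addOrderOf (1 : Q) :=
    AddMonoid.exponent_dvd_of_forall_nsmul_eq_zero fun x => by
      rw [← mul_one x, ← mul_smul_comm, addOrderOf_nsmul_eq_zero, mul_zero]
  have hone : addOrderOf (1 : Q) = Nat.card Q :=
    Nat.dvd_antisymm (addOrderOf_dvd_natCard 1) (IsAddCyclic.exponent_eq_card (α := Q) ▸ hexp)
  have htop : AddSubgroup.zmultiples (1 : Q) = ⊤ :=
    AddSubgroup.eq_top_of_card_eq _ (by rw [Nat.card_zmultiples, hone])
  intro x
  obtain ⟨k, hk⟩ := AddSubgroup.mem_zmultiples_iff.mp (htop ▸ AddSubgroup.mem_top x)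
  exact ⟨k, by rw [← hk, zsmul_one]⟩

open Polynomial

namespace AdjoinRoot

variable {F : ℤ[X]}

theorem map_mk_of_map_root {S : Type*} [CommRing S] (f : AdjoinRoot F →+* S) {μ : ℤ}
    (hf : f (root F) = μ) (p : ℤ[X]) : f (mk F p) = ((p.eval μ : ℤ) : S) := by
  have hcomp : f.comp (mk F) = (Int.castRingHom S).comp (evalRingHom μ) := by
    ext : 1
    · exact RingHom.ext_int _ _
    show f (mk F X) = ((X.eval μ : ℤ) : S)
    rw [mk_X, hf, eval_X]
  exact congr($hcomp p)

theorem exists_sub_intCast_mem_span (hF : F.Monic) (μ : ℤ) (x : AdjoinRoot F) :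
    ∃ c : ℤ, x - c ∈ Submodule.span ℤ
      ((fun j : ℕ => root F ^ j - (μ : AdjoinRoot F) ^ j) '' Set.Ico 1 F.natDegree) := by
  set pb := powerBasis' hF
  refine ⟨∑ i, pb.basis.repr x i * μ ^ (i : ℕ), ?_⟩
  have hx : x - (∑ i, pb.basis.repr x i * μ ^ (i : ℕ) : ℤ)
      = ∑ i, pb.basis.repr x i • (root F ^ (i : ℕ) - (μ : AdjoinRoot F) ^ (i : ℕ)) := by
    have hsum : ∑ i, (pb.basis.repr x i : AdjoinRoot F) * root F ^ (i : ℕ) = x := by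
      simpa [pb.coe_basis, pb, zsmul_eq_mul] using pb.basis.sum_repr x
    simp only [zsmul_eq_mul, mul_sub, Finset.sum_sub_distrib, hsum]
    push_cast
    rfl
  rw [hx]
  refine Submodule.sum_mem _ fun i _ => Submodule.smul_mem _ _ ?_
  rcases Nat.eq_zero_or_pos i with hi | hi
  · simp [hi]
  · exact Submodule.subset_span ⟨i, ⟨hi, i.isLt⟩, rfl⟩

theorem ker_restrictScalars_eq_rootSpan (hF : F.Monic) {S : Type*} [CommRing S] (n : ℕ)
    [CharP S n] (f : AdjoinRoot F →+* S) {μ : ℤ} (hf : f (root F) = μ) :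
    (RingHom.ker f).restrictScalars ℤ = rootSpan F F.natDegree n μ := by
  have hpow : ∀ j : ℕ, root F ^ j - (μ : AdjoinRoot F) ^ j ∈ RingHom.ker f := fun j => by
    simp [RingHom.mem_ker, hf]
  have hspan : Submodule.span ℤ
      ((fun j : ℕ => root F ^ j - (μ : AdjoinRoot F) ^ j) '' Set.Ico 1 F.natDegree)
      ≤ (RingHom.ker f).restrictScalars ℤ :=
    Submodule.span_le.mpr (by rintro _ ⟨j, -, rfl⟩; exact hpow j)
  apply le_antisymm
  · intro x hx
    obtain ⟨c, hc⟩ := exists_sub_intCast_mem_span hF μ x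
    have hcS : (c : S) = 0 := by
      have hxc : f (x - c) = 0 := hspan hc
      rwa [map_sub, RingHom.mem_ker.mp hx, map_intCast, zero_sub, neg_eq_zero] at hxc
    obtain ⟨k, rfl⟩ := (CharP.intCast_eq_zero_iff S n c).mp hcS
    have hnk : ((n * k : ℤ) : AdjoinRoot F) = k • ((n : ℤ) : AdjoinRoot F) := by
      rw [zsmul_eq_mul, Int.cast_mul, mul_comm]
    rw [← sub_add_cancel x ((n * k : ℤ) : AdjoinRoot F)]
    refine add_mem (Submodule.span_mono Set.subset_union_right hc) ?_
    rw [hnk]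
    exact Submodule.smul_mem _ _ (Submodule.subset_span (Or.inl rfl))
  · rw [rootSpan, Submodule.span_le]
    rintro _ (rfl | ⟨j, -, rfl⟩)
    · simp [RingHom.mem_ker]
    · exact hpow j

noncomputable def liftZMod {n : ℕ} {μ : ℤ} (h : (n : ℤ) ∣ F.eval μ) : AdjoinRoot F →+* ZMod n :=
  lift (Int.castRingHom (ZMod n)) μ <| by
    rw [eval₂_at_intCast]
    exact (ZMod.intCast_zmod_eq_zero_iff_dvd _ n).mpr h

section liftZMod

variable {n : ℕ} {μ : ℤ} (h : (n : ℤ) ∣ F.eval μ)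

theorem liftZMod_root : liftZMod h (root F) = μ :=
  lift_root _

theorem liftZMod_surjective : Function.Surjective (liftZMod h) := by
  intro y
  obtain ⟨k, rfl⟩ := ZMod.intCast_surjective y
  exact ⟨k, map_intCast _ k⟩

theorem card_quotient_ker_liftZMod : Nat.card (AdjoinRoot F ⧸ RingHom.ker (liftZMod h)) = n := by
  rw [Nat.card_congr (RingHom.quotientKerEquivOfSurjective (liftZMod_surjective h)).toEquiv,
    Nat.card_zmod]

theorem ker_liftZMod (hF : F.Monic) :
    (RingHom.ker (liftZMod h)).restrictScalars ℤ = rootSpan F F.natDegree n μ :=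
  ker_restrictScalars_eq_rootSpan hF n _ (liftZMod_root h)

end liftZMod

theorem eq_and_modEq_of_rootSpan_eq (hF : F.Monic) {m m' : ℕ} {μ μ' : ℤ}
    (h : (m : ℤ) ∣ F.eval μ) (h' : (m' : ℤ) ∣ F.eval μ')
    (heq : rootSpan F F.natDegree m μ = rootSpan F F.natDegree m' μ') :
    m = m' ∧ μ ≡ μ' [ZMOD m] := by
  have hker : RingHom.ker (liftZMod h) = RingHom.ker (liftZMod h') :=
    Submodule.restrictScalars_injective ℤ _ _ <| by rw [ker_liftZMod h hF, ker_liftZMod h' hF, heq]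
  have hm : m = m' := by
    rw [← card_quotient_ker_liftZMod h, ← card_quotient_ker_liftZMod h', hker]
  subst hm
  refine ⟨rfl, ?_⟩
  have hroot : root F - (μ : AdjoinRoot F) ∈ RingHom.ker (liftZMod h') :=
    hker ▸ by simp [RingHom.mem_ker, liftZMod_root]
  rw [RingHom.mem_ker, map_sub, map_intCast, liftZMod_root, sub_eq_zero] at hroot
  exact ((ZMod.intCast_eq_intCast_iff _ _ _).mp hroot).symm

end AdjoinRoot

open AdjoinRoot in
theorem stmt3_general (d : ℕ) (F : Polynomial ℤ) (hF : F.Monic)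
    (hdeg : F.natDegree = d)
    (I : Ideal (AdjoinRoot F)) (hfin : Finite (AdjoinRoot F ⧸ I))
    (hcyc : IsAddCyclic (AdjoinRoot F ⧸ I)) :
    ∃ (m : ℤ) (μ : ℤ), 0 < m ∧ m ∣ F.eval μ ∧
      I.restrictScalars ℤ = rootSpan F d m μ ∧
      ∀ (m' μ' : ℤ), 0 < m' → m' ∣ F.eval μ' →
        I.restrictScalars ℤ = rootSpan F d m' μ' →
        m' = m ∧ μ' ≡ μ [ZMOD m] := by
  subst hdeg
  set Q := AdjoinRoot F ⧸ I
  set n := ringChar Q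
  obtain ⟨μ, hμ⟩ := intCast_surjective_of_isAddCyclic Q (Ideal.Quotient.mk I (root F))
  have hspan : I.restrictScalars ℤ = rootSpan F F.natDegree n μ := by
    rw [← ker_restrictScalars_eq_rootSpan hF n _ hμ.symm, Ideal.mk_ker]
  have hdvd : (n : ℤ) ∣ F.eval μ := by
    rw [← CharP.intCast_eq_zero_iff Q n, ← map_mk_of_map_root _ hμ.symm, mk_self, map_zero]
  refine ⟨n, μ, by exact_mod_cast (CharP.char_ne_zero_of_finite Q n).bot_lt, hdvd, hspan, ?_⟩
  intro m' μ' hm' hdvd' hspan'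
  lift m' to ℕ using hm'.le
  obtain ⟨rfl, hμμ'⟩ := eq_and_modEq_of_rootSpan_eq hF hdvd' hdvd (hspan'.symm.trans hspan)
  exact ⟨rfl, hμμ'⟩

/-- Every finite-index ideal `I` of `R = ℤ[X]/(F)` with `R/I`
cyclic arises from a unique positive integer `m` and a unique residue class
`μ mod m` with `F(μ) ≡ 0 (mod m)`, by taking the ℤ-span of
`α^(d-1) - μ^(d-1), …, α - μ, m`. -/
theorem stmt3 (d : ℕ) (hd : 2 ≤ d) (F : Polynomial ℤ) (hF : F.Monic)
    (hdeg : F.natDegree = d)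
    (I : Ideal (AdjoinRoot F)) (hfin : Finite (AdjoinRoot F ⧸ I))
    (hcyc : IsAddCyclic (AdjoinRoot F ⧸ I)) :
    ∃ (m : ℤ) (μ : ℤ), 0 < m ∧ m ∣ F.eval μ ∧
      I.restrictScalars ℤ = rootSpan F d m μ ∧
      ∀ (m' μ' : ℤ), 0 < m' → m' ∣ F.eval μ' →
        I.restrictScalars ℤ = rootSpan F d m' μ' →
        m' = m ∧ μ' ≡ μ [ZMOD m] :=
  stmt3_general d F hF hdeg I hfin hcyc
end

section
/- Let F(X) = X^3 + a_1 X^2 + a_2 X + a_3 ∈ Z[X], α the class of X in R = Z[X]/(F). Let m_1, m_2 be positive integers and μ_1, μ_2, λ integers, and let I be the Z-span in R of β_1 = α^2 + (μ_1 + a_1)α + λ, β_2 = m_1 α − μ_2 m_1, β_3 = m_1 m_2. If I is an ideal of R, then F(μ_1) ≡ 0 (mod m_1) and F(μ_2) ≡ 0 (mod m_2). -/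
/-!
In the basis `1, α, α²` of `ℤ[X]/(F)`, with coordinates `c₀, c₁, c₂`, each generator of `I`, hence
every element of `I`, satisfies `c₁ ≡ (μ₁ + a₁) c₂ (mod m₁)` and
`c₀ - λ c₂ + μ₂ (c₁ - (μ₁ + a₁) c₂) ≡ 0 (mod m₁ m₂)`. Since `I` is an ideal it contains
`α β₁ = μ₁ α² + (λ - a₂) α - a₃` (as `α³ = -a₁ α² - a₂ α - a₃`) and `α β₂ = m₁ α² - μ₂ m₁ α`.
The resulting integer divisibilities, after cancelling `m₁` in the one coming from `α β₂`, have
`F(μ₁)` and `F(μ₂)` as integer combinations.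
-/

open Polynomial

/-- The ℤ-span in `ℤ[X]/(F)` (F cubic) of
`β₁ = α² + (μ₁+a₁)α + λ`, `β₂ = m₁α - μ₂m₁`, `β₃ = m₁m₂`. -/
noncomputable def cubicSpan (F : Polynomial ℤ) (a1 m1 m2 μ1 μ2 lam : ℤ) :
    Submodule ℤ (AdjoinRoot F) :=
  Submodule.span ℤ
    {AdjoinRoot.root F ^ 2 + ((μ1 + a1 : ℤ) : AdjoinRoot F) * AdjoinRoot.root F
        + ((lam : ℤ) : AdjoinRoot F),
      ((m1 : ℤ) : AdjoinRoot F) * AdjoinRoot.root F - ((μ2 * m1 : ℤ) : AdjoinRoot F),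
      ((m1 * m2 : ℤ) : AdjoinRoot F)}

namespace AdjoinRoot

variable {R : Type*} [CommRing R] {F : R[X]}

noncomputable def coord (hmon : F.Monic) (k : ℕ) : AdjoinRoot F →ₗ[R] R :=
  (lcoeff R k).comp (modByMonicHom hmon)

theorem coord_mk_of_degree_lt (hmon : F.Monic) (k : ℕ) {p : R[X]} (hp : p.degree < F.degree) :
    coord hmon k (mk F p) = p.coeff k := by
  nontriviality R
  simp [coord, (modByMonic_eq_self_iff hmon).2 hp]

theorem coord_of_eq_quadratic (hmon : F.Monic) (hdeg : 2 < F.natDegree) {c0 c1 c2 : R}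
    {x : AdjoinRoot F} (hx : x = of F c2 * root F ^ 2 + of F c1 * root F + of F c0) :
    coord hmon 0 x = c0 ∧ coord hmon 1 x = c1 ∧ coord hmon 2 x = c2 := by
  have hmk : x = mk F (C c2 * X ^ 2 + C c1 * X + C c0) := by
    simp [hx, mk_C]
  have hp : (C c2 * X ^ 2 + C c1 * X + C c0).degree < F.degree :=
    degree_lt_degree (natDegree_quadratic_le.trans_lt hdeg)
  simp only [hmk, coord_mk_of_degree_lt hmon _ hp]
  simp [coeff_X, coeff_C]

theorem root_pow_three_of_eq_cubic {a1 a2 a3 : R}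
    (hF : F = X ^ 3 + C a1 * X ^ 2 + C a2 * X + C a3) :
    root F ^ 3 = -(of F a1 * root F ^ 2 + of F a2 * root F + of F a3) := by
  have h : mk F (X ^ 3 + C a1 * X ^ 2 + C a2 * X + C a3) = 0 := by rw [← hF]; exact mk_self
  simp only [map_add, map_mul, map_pow, mk_X, mk_C] at h
  linear_combination h

end AdjoinRoot

open AdjoinRoot

section CubicSpan

variable {F : ℤ[X]} (hmon : F.Monic) (hdeg : 2 < F.natDegree) {a1 m1 m2 μ1 μ2 lam : ℤ}
include hmon hdeg

theorem dvd_coord_of_mem_cubicSpan {x : AdjoinRoot F} (hx : x ∈ cubicSpan F a1 m1 m2 μ1 μ2 lam) :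
    m1 ∣ coord hmon 1 x - (μ1 + a1) * coord hmon 2 x ∧
      m1 * m2 ∣ coord hmon 0 x - lam * coord hmon 2 x +
        μ2 * (coord hmon 1 x - (μ1 + a1) * coord hmon 2 x) := by
  set ℓ₁ : AdjoinRoot F →ₗ[ℤ] ℤ := coord hmon 1 - (μ1 + a1) • coord hmon 2 with hℓ₁
  set ℓ₂ : AdjoinRoot F →ₗ[ℤ] ℤ := coord hmon 0 - lam • coord hmon 2 + μ2 • ℓ₁ with hℓ₂
  have hle : cubicSpan F a1 m1 m2 μ1 μ2 lam ≤
      Submodule.comap ℓ₁ (Ideal.span {m1}) ⊓ Submodule.comap ℓ₂ (Ideal.span {m1 * m2}) := by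
    refine Submodule.span_le.2 ?_
    intro g hg
    simp only [Set.mem_insert_iff, Set.mem_singleton_iff] at hg
    simp only [SetLike.mem_coe, Submodule.mem_inf, Submodule.mem_comap,
      Ideal.mem_span_singleton, hℓ₁, hℓ₂, LinearMap.add_apply, LinearMap.sub_apply,
      LinearMap.smul_apply, smul_eq_mul]
    rcases hg with hg | hg | hg
    · obtain ⟨h0, h1, h2⟩ := coord_of_eq_quadratic hmon hdeg (x := g) (c0 := lam) (c1 := μ1 + a1)
        (c2 := 1) (by simp [hg])
      rw [h0, h1, h2]
      exact ⟨⟨0, by ring⟩, ⟨0, by ring⟩⟩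
    · obtain ⟨h0, h1, h2⟩ := coord_of_eq_quadratic hmon hdeg (x := g) (c0 := -(μ2 * m1)) (c1 := m1)
        (c2 := 0) (by simp [hg]; ring)
      rw [h0, h1, h2]
      exact ⟨⟨1, by ring⟩, ⟨0, by ring⟩⟩
    · obtain ⟨h0, h1, h2⟩ := coord_of_eq_quadratic hmon hdeg (x := g) (c0 := m1 * m2) (c1 := 0)
        (c2 := 0) (by simp [hg])
      rw [h0, h1, h2]
      exact ⟨⟨0, by ring⟩, ⟨1, by ring⟩⟩
  simpa only [Submodule.mem_inf, Submodule.mem_comap, Ideal.mem_span_singleton, hℓ₁, hℓ₂,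
    LinearMap.add_apply, LinearMap.sub_apply, LinearMap.smul_apply, smul_eq_mul] using hle hx

theorem dvd_of_quadratic_mem_cubicSpan {x : AdjoinRoot F}
    (hx : x ∈ cubicSpan F a1 m1 m2 μ1 μ2 lam) {c0 c1 c2 : ℤ}
    (hq : x = (c2 : AdjoinRoot F) * root F ^ 2 + (c1 : AdjoinRoot F) * root F + c0) :
    m1 ∣ c1 - (μ1 + a1) * c2 ∧ m1 * m2 ∣ c0 - lam * c2 + μ2 * (c1 - (μ1 + a1) * c2) := by
  obtain ⟨h0, h1, h2⟩ := coord_of_eq_quadratic hmon hdeg (c0 := c0) (c1 := c1) (c2 := c2)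
    (by simpa using hq)
  simpa only [h0, h1, h2] using dvd_coord_of_mem_cubicSpan hmon hdeg hx

end CubicSpan

theorem stmt4_general (a1 a2 a3 m1 m2 μ1 μ2 lam : ℤ) (hm1 : 0 < m1)
    (F : Polynomial ℤ)
    (hF : F = X ^ 3 + C a1 * X ^ 2 + C a2 * X + C a3)
    (hIdeal : ∀ x ∈ cubicSpan F a1 m1 m2 μ1 μ2 lam,
      AdjoinRoot.root F * x ∈ cubicSpan F a1 m1 m2 μ1 μ2 lam) :
    m1 ∣ F.eval μ1 ∧ m2 ∣ F.eval μ2 := by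
  have hmon : F.Monic := by rw [hF]; monicity!
  have hdeg : 2 < F.natDegree := by
    have : F.natDegree = 3 := by rw [hF]; compute_degree!
    omega
  have hα := root_pow_three_of_eq_cubic hF
  simp only [eq_intCast] at hα
  have hβ₁ := hIdeal _ (Submodule.subset_span (Set.mem_insert _ _))
  have hβ₂ := hIdeal _ (Submodule.subset_span (Set.mem_insert_of_mem _ (Set.mem_insert _ _)))
  obtain ⟨hB, hC⟩ := dvd_of_quadratic_mem_cubicSpan hmon hdeg hβ₁
    (c0 := -a3) (c1 := lam - a2) (c2 := μ1) (by push_cast; linear_combination hα)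
  obtain ⟨-, hA⟩ := dvd_of_quadratic_mem_cubicSpan hmon hdeg hβ₂
    (c0 := 0) (c1 := -(μ2 * m1)) (c2 := m1) (by push_cast; ring)
  have hA' : m2 ∣ -lam - μ2 * (μ2 + μ1 + a1) :=
    (mul_dvd_mul_iff_left hm1.ne').1 (hA.trans (dvd_of_eq (by ring)))
  have heval (t : ℤ) : F.eval t = t ^ 3 + a1 * t ^ 2 + a2 * t + a3 := by simp [hF]
  constructor
  · refine (hB.linear_comb (dvd_of_mul_right_dvd hC) (μ2 - μ1) (-1)).trans (dvd_of_eq ?_)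
    rw [heval]; ring
  · refine (hA'.linear_comb (dvd_of_mul_left_dvd hC) (μ1 - μ2) (-1)).trans (dvd_of_eq ?_)
    rw [heval]; ring

/-- if the lattice `cubicSpan` is an ideal of `ℤ[X]/(F)` for the
monic cubic `F = X³ + a₁X² + a₂X + a₃`, then `F(μ₁) ≡ 0 (mod m₁)` and
`F(μ₂) ≡ 0 (mod m₂)`. -/
theorem stmt4 (a1 a2 a3 m1 m2 μ1 μ2 lam : ℤ) (hm1 : 0 < m1) (hm2 : 0 < m2)
    (F : Polynomial ℤ)
    (hF : F = X ^ 3 + C a1 * X ^ 2 + C a2 * X + C a3)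
    (hIdeal : ∀ x ∈ cubicSpan F a1 m1 m2 μ1 μ2 lam,
      AdjoinRoot.root F * x ∈ cubicSpan F a1 m1 m2 μ1 μ2 lam) :
    m1 ∣ F.eval μ1 ∧ m2 ∣ F.eval μ2 :=
  stmt4_general a1 a2 a3 m1 m2 μ1 μ2 lam hm1 F hF hIdeal
end

section
/- Let F(X) = X^3 + a_1X^2 + a_2X + a_3 ∈ Z[X], α the class of X in R = Z[X]/(F). Suppose m_1, m_2 are positive integers and integers μ_1, μ_2 satisfy F(μ_1) ≡ 0 (mod m_1), F(μ_2) ≡ 0 (mod m_2), and gcd(m_1, m_2, μ_1 − μ_2) = 1. Then there exists an integer λ such that the Z-span of α^2 + (μ_1 + a_1)α + λ, m_1α − μ_2 m_1, and m_1 m_2 is an ideal of R, and λ is unique modulo m_1 m_2. -/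
open Polynomial

namespace Int

variable {m₁ m₂ t u v w : ℤ}

theorem exists_bezout_of_gcd_gcd_eq_one (h : Int.gcd (Int.gcd m₁ m₂) t = 1) :
    ∃ u v w : ℤ, u * m₁ + v * m₂ + w * t = 1 := by
  obtain ⟨r, s, hrs⟩ := Int.isCoprime_iff_gcd_eq_one.2 h
  refine ⟨r * m₁.gcdA m₂, r * m₁.gcdB m₂, s, ?_⟩
  rw [← hrs, Int.gcd_eq_gcd_ab]
  ring

theorem ModEq.of_bezout (huvw : u * m₁ + v * m₂ + w * t = 1) {x y : ℤ}
    (h₁ : x ≡ y [ZMOD m₁]) (h₂ : x ≡ y [ZMOD m₂]) (ht : t * x ≡ t * y [ZMOD m₁ * m₂]) :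
    x ≡ y [ZMOD m₁ * m₂] := by
  rw [Int.modEq_iff_dvd] at *
  have hδ : y - x = u * (m₁ * (y - x)) + v * ((y - x) * m₂) + w * (t * y - t * x) := by
    linear_combination -(y - x) * huvw
  rw [hδ]
  exact dvd_add (dvd_add ((mul_dvd_mul_left m₁ h₂).mul_left u)
    ((mul_dvd_mul_right h₁ m₂).mul_left v)) (ht.mul_left w)

theorem exists_modEq_of_bezout (huvw : u * m₁ + v * m₂ + w * t = 1) {a b c : ℤ}
    (hb : t * b ≡ c [ZMOD m₁]) (ha : t * a ≡ c [ZMOD m₂]) :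
    ∃ x, x ≡ b [ZMOD m₁] ∧ x ≡ a [ZMOD m₂] ∧ t * x ≡ c [ZMOD m₁ * m₂] := by
  obtain ⟨k₁, hk₁⟩ := Int.modEq_iff_dvd.1 hb
  obtain ⟨k₂, hk₂⟩ := Int.modEq_iff_dvd.1 ha
  refine ⟨u * m₁ * a + v * m₂ * b + w * c, Int.modEq_iff_dvd.2 ⟨u * (b - a) - w * k₁, ?_⟩,
    Int.modEq_iff_dvd.2 ⟨v * (a - b) - w * k₂, ?_⟩, Int.modEq_iff_dvd.2 ⟨u * k₂ + v * k₁, ?_⟩⟩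
  · linear_combination -b * huvw - w * hk₁
  · linear_combination -a * huvw - w * hk₂
  · linear_combination -c * huvw + u * m₁ * hk₂ + v * m₂ * hk₁

end Int

theorem Submodule.forall_mul_mem_span_iff {R A : Type*} [CommSemiring R] [Semiring A]
    [Algebra R A] (a : A) (s : Set A) :
    (∀ x ∈ span R s, a * x ∈ span R s) ↔ ∀ x ∈ s, a * x ∈ span R s :=
  span_le (p := (span R s).comap (LinearMap.mulLeft R a))

namespace AdjoinRoot

variable {F : ℤ[X]}

theorem root_pow_three {a1 a2 a3 : ℤ} (hF : F = X ^ 3 + C a1 * X ^ 2 + C a2 * X + C a3) :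
    root F ^ 3 = -((a1 : AdjoinRoot F) * root F ^ 2 + a2 * root F + a3) := by
  have h : mk F (X ^ 3 + C a1 * X ^ 2 + C a2 * X + C a3) = 0 := hF ▸ mk_self
  simp only [eq_intCast, map_add, map_pow, mk_X, map_mul, map_intCast] at h
  linear_combination h

theorem eq_zero_of_intCast_mul_root_sq_add (hF : F.degree = 3) {p q r : ℤ}
    (h : (p : AdjoinRoot F) * root F ^ 2 + q * root F + r = 0) : p = 0 ∧ q = 0 ∧ r = 0 := by
  have hdvd : F ∣ C p * X ^ 2 + C q * X + C r := by
    rw [← mk_eq_zero]; simpa using h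
  have h0 := eq_zero_of_dvd_of_degree_lt hdvd (hF ▸ degree_quadratic_lt)
  have hc (n : ℕ) := congrArg (coeff · n) h0
  simp only [coeff_add, coeff_C_mul, coeff_X_pow, coeff_X, coeff_C, coeff_zero] at hc
  exact ⟨by simpa using hc 2, by simpa using hc 1, by simpa using hc 0⟩

end AdjoinRoot

section cubicSpan

open AdjoinRoot

variable {F : ℤ[X]} {a1 a2 a3 m1 m2 μ1 μ2 lam : ℤ}

theorem intCast_mul_root_sq_add_mem_cubicSpan_iff (hF : F.degree = 3) (p q r : ℤ) :
    (p : AdjoinRoot F) * root F ^ 2 + q * root F + r ∈ cubicSpan F a1 m1 m2 μ1 μ2 lam ↔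
      m1 ∣ q - p * (μ1 + a1) ∧ m1 * m2 ∣ r - p * lam + μ2 * (q - p * (μ1 + a1)) := by
  rw [cubicSpan, Submodule.mem_span_triple]
  constructor
  · rintro ⟨c₁, c₂, c₃, h⟩
    simp only [zsmul_eq_mul] at h
    push_cast at h
    obtain ⟨hp, hq, hr⟩ := eq_zero_of_intCast_mul_root_sq_add hF (p := p - c₁)
      (q := q - c₁ * (μ1 + a1) - c₂ * m1) (r := r - c₁ * lam + c₂ * (μ2 * m1) - c₃ * (m1 * m2))
      (by push_cast; linear_combination -h)
    exact ⟨⟨c₂, by linear_combination hq - (μ1 + a1) * hp⟩,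
      ⟨c₃, by linear_combination hr - lam * hp + μ2 * hq - μ2 * (μ1 + a1) * hp⟩⟩
  · rintro ⟨⟨c₂, hc₂⟩, ⟨c₃, hc₃⟩⟩
    obtain rfl : q = p * (μ1 + a1) + m1 * c₂ := by linear_combination hc₂
    obtain rfl : r = p * lam - μ2 * (m1 * c₂) + m1 * m2 * c₃ := by linear_combination hc₃
    exact ⟨p, c₂, c₃, by simp only [zsmul_eq_mul]; push_cast; ring⟩

theorem forall_root_mul_mem_cubicSpan_iff (hF : F = X ^ 3 + C a1 * X ^ 2 + C a2 * X + C a3)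
    (hm1 : m1 ≠ 0) :
    (∀ x ∈ cubicSpan F a1 m1 m2 μ1 μ2 lam, root F * x ∈ cubicSpan F a1 m1 m2 μ1 μ2 lam) ↔
      lam ≡ a2 + μ1 * (μ1 + a1) [ZMOD m1] ∧ lam ≡ -(μ2 * (μ1 + μ2 + a1)) [ZMOD m2] ∧
        (μ2 - μ1) * lam ≡ μ2 * (a2 + μ1 * (μ1 + a1)) + a3 [ZMOD m1 * m2] := by
  have hdeg : F.degree = 3 := by rw [hF]; compute_degree!
  have hα := root_pow_three hF
  have e₁ : root F * (root F ^ 2 + ((μ1 + a1 : ℤ) : AdjoinRoot F) * root F + (lam : AdjoinRoot F))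
      = (μ1 : AdjoinRoot F) * root F ^ 2 + ((lam - a2 : ℤ) : AdjoinRoot F) * root F
        + ((-a3 : ℤ) : AdjoinRoot F) := by
    linear_combination (norm := (push_cast; ring)) hα
  have e₂ : root F * ((m1 : AdjoinRoot F) * root F - ((μ2 * m1 : ℤ) : AdjoinRoot F))
      = (m1 : AdjoinRoot F) * root F ^ 2 + ((-(μ2 * m1) : ℤ) : AdjoinRoot F) * root F
        + ((0 : ℤ) : AdjoinRoot F) := by
    push_cast; ring
  have e₃ : root F * ((m1 * m2 : ℤ) : AdjoinRoot F)
      = ((0 : ℤ) : AdjoinRoot F) * root F ^ 2 + ((m1 * m2 : ℤ) : AdjoinRoot F) * root F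
        + ((0 : ℤ) : AdjoinRoot F) := by
    push_cast; ring
  unfold cubicSpan
  rw [Submodule.forall_mul_mem_span_iff]
  simp only [Set.forall_mem_insert, Set.mem_singleton_iff, forall_eq]
  rw [← cubicSpan, e₁, e₂, e₃]
  simp only [intCast_mul_root_sq_add_mem_cubicSpan_iff hdeg, Int.modEq_iff_dvd]
  constructor
  · rintro ⟨⟨h₁, h₁₂⟩, ⟨-, h₂⟩, -⟩
    refine ⟨by convert Int.dvd_neg.2 h₁ using 1; ring,
      (Int.mul_dvd_mul_iff_left hm1).1 (by convert h₂ using 1; ring),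
      by convert Int.dvd_neg.2 h₁₂ using 1; ring⟩
  · rintro ⟨h₁, h₂, h₁₂⟩
    refine ⟨⟨by convert Int.dvd_neg.2 h₁ using 1; ring,
        by convert Int.dvd_neg.2 h₁₂ using 1; ring⟩,
      ⟨⟨-(μ1 + μ2 + a1), by ring⟩, by convert Int.mul_dvd_mul_left m1 h₂ using 1; ring⟩,
      ⟨m2, by ring⟩, ⟨μ2, by ring⟩⟩

end cubicSpan

theorem stmt5_general (a1 a2 a3 m1 m2 μ1 μ2 : ℤ) (hm1 : 0 < m1)
    (F : Polynomial ℤ)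
    (hF : F = X ^ 3 + C a1 * X ^ 2 + C a2 * X + C a3)
    (h1 : m1 ∣ F.eval μ1) (h2 : m2 ∣ F.eval μ2)
    (hgcd : Int.gcd (Int.gcd m1 m2) (μ1 - μ2) = 1) :
    ∃ lam : ℤ,
      (∀ x ∈ cubicSpan F a1 m1 m2 μ1 μ2 lam,
        AdjoinRoot.root F * x ∈ cubicSpan F a1 m1 m2 μ1 μ2 lam) ∧
      ∀ lam' : ℤ,
        (∀ x ∈ cubicSpan F a1 m1 m2 μ1 μ2 lam',
          AdjoinRoot.root F * x ∈ cubicSpan F a1 m1 m2 μ1 μ2 lam') →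
        lam' ≡ lam [ZMOD m1 * m2] := by
  obtain ⟨u, v, w, huvw⟩ := Int.exists_bezout_of_gcd_gcd_eq_one hgcd
  replace huvw : u * m1 + v * m2 + -w * (μ2 - μ1) = 1 := by linear_combination huvw
  have hideal (lam : ℤ) :=
    forall_root_mul_mem_cubicSpan_iff (m2 := m2) (μ1 := μ1) (μ2 := μ2) (lam := lam) hF hm1.ne'
  have heval (μ : ℤ) : F.eval μ = μ ^ 3 + a1 * μ ^ 2 + a2 * μ + a3 := by simp [hF]
  have hb : (μ2 - μ1) * (a2 + μ1 * (μ1 + a1)) ≡ μ2 * (a2 + μ1 * (μ1 + a1)) + a3 [ZMOD m1] :=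
    Int.modEq_iff_dvd.2 (by convert h1 using 1; rw [heval]; ring)
  have ha : (μ2 - μ1) * -(μ2 * (μ1 + μ2 + a1)) ≡ μ2 * (a2 + μ1 * (μ1 + a1)) + a3 [ZMOD m2] :=
    Int.modEq_iff_dvd.2 (by convert h2 using 1; rw [heval]; ring)
  obtain ⟨lam, hlb, hla, hlt⟩ := Int.exists_modEq_of_bezout huvw hb ha
  refine ⟨lam, (hideal lam).2 ⟨hlb, hla, hlt⟩, fun lam' hlam' ↦ ?_⟩
  obtain ⟨hlb', hla', hlt'⟩ := (hideal lam').1 hlam'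
  exact Int.ModEq.of_bezout huvw (hlb'.trans hlb.symm) (hla'.trans hla.symm) (hlt'.trans hlt.symm)

/-- given roots `μ₁ mod m₁`, `μ₂ mod m₂` of the monic cubic `F`
with `gcd(m₁, m₂, μ₁ - μ₂) = 1`, there is a `λ`, unique modulo `m₁m₂`, making
the lattice `cubicSpan` an ideal of `ℤ[X]/(F)`. -/
theorem stmt5 (a1 a2 a3 m1 m2 μ1 μ2 : ℤ) (hm1 : 0 < m1) (hm2 : 0 < m2)
    (F : Polynomial ℤ)
    (hF : F = X ^ 3 + C a1 * X ^ 2 + C a2 * X + C a3)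
    (h1 : m1 ∣ F.eval μ1) (h2 : m2 ∣ F.eval μ2)
    (hgcd : Int.gcd (Int.gcd m1 m2) (μ1 - μ2) = 1) :
    ∃ lam : ℤ,
      (∀ x ∈ cubicSpan F a1 m1 m2 μ1 μ2 lam,
        AdjoinRoot.root F * x ∈ cubicSpan F a1 m1 m2 μ1 μ2 lam) ∧
      ∀ lam' : ℤ,
        (∀ x ∈ cubicSpan F a1 m1 m2 μ1 μ2 lam',
          AdjoinRoot.root F * x ∈ cubicSpan F a1 m1 m2 μ1 μ2 lam') →
        lam' ≡ lam [ZMOD m1 * m2] :=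
  stmt5_general a1 a2 a3 m1 m2 μ1 μ2 hm1 F hF h1 h2 hgcd
end

section
/- Let F be a monic cubic polynomial over Z with discriminant D, and suppose μ_1, μ_2, m_1, m_2 are integers with m_1, m_2 > 0, F(μ_1) ≡ 0 (mod m_1), F(μ_2) ≡ 0 (mod m_2), and there is an integer λ with λ ≡ μ_1^2 + a_1μ_1 + a_2 (mod m_1) and λ ≡ −μ_2^2 − μ_1μ_2 − a_1μ_2 (mod m_2). If a prime p divides gcd(m_1, m_2, μ_1 − μ_2), then p divides D. -/
/-!
The congruences for `λ` force `p` to divide the divided difference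
`(F(μ₁) - F(μ₂)) / (μ₁ - μ₂) = μ₁² + μ₁μ₂ + μ₂² + a₁(μ₁ + μ₂) + a₂`, which is congruent to
`F'(μ₁)` modulo `μ₁ - μ₂`. So `μ₁` is a common root of `F` and `F'` modulo `p`, and `p` divides
`D` because the discriminant of a monic cubic is an explicit combination of `F` and `F'`.
-/

open Polynomial

namespace Cubic

variable {R : Type*} [CommRing R] {P : Cubic R}

theorem eval_toPoly (x : R) : P.toPoly.eval x = P.a * x ^ 3 + P.b * x ^ 2 + P.c * x + P.d := by
  simp only [toPoly, eval_add, eval_mul, eval_pow, eval_C, eval_X]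

theorem eval_derivative_toPoly (x : R) :
    (derivative P.toPoly).eval x = 3 * P.a * x ^ 2 + 2 * P.b * x + P.c := by
  simp only [toPoly, derivative_add, derivative_C_mul_X_pow, derivative_C_mul_X, derivative_C,
    eval_add, eval_mul, eval_pow, eval_C, eval_X, eval_zero]
  push_cast
  ring

theorem discr_eq_mul_eval_add_mul_eval_derivative (ha : P.a = 1) (x : R) :
    P.discr = ((18 * P.c - 6 * P.b ^ 2) * x + (-27 * P.d + 15 * P.b * P.c - 4 * P.b ^ 3))
        * P.toPoly.eval x
      + ((-6 * P.c + 2 * P.b ^ 2) * x ^ 2 + (9 * P.d - 7 * P.b * P.c + 2 * P.b ^ 3) * x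
        + (-4 * P.c ^ 2 + 3 * P.b * P.d + P.b ^ 2 * P.c)) * (derivative P.toPoly).eval x := by
  rw [discr, eval_toPoly, eval_derivative_toPoly, ha]
  ring

theorem dvd_discr_of_dvd_eval_of_dvd_eval_derivative (ha : P.a = 1) {d x : R}
    (hF : d ∣ P.toPoly.eval x) (hF' : d ∣ (derivative P.toPoly).eval x) : d ∣ P.discr := by
  rw [discr_eq_mul_eval_add_mul_eval_derivative ha x]
  exact dvd_add (dvd_mul_of_dvd_right hF _) (dvd_mul_of_dvd_right hF' _)

theorem dvd_eval_derivative_of_dvd_sub (ha : P.a = 1) {d x y : R} (hxy : d ∣ x - y)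
    (h : d ∣ x ^ 2 + x * y + y ^ 2 + P.b * (x + y) + P.c) :
    d ∣ (derivative P.toPoly).eval x := by
  have key : (derivative P.toPoly).eval x
      = x ^ 2 + x * y + y ^ 2 + P.b * (x + y) + P.c + (x - y) * (2 * x + y + P.b) := by
    rw [eval_derivative_toPoly, ha]
    ring
  rw [key]
  exact dvd_add h (dvd_mul_of_dvd_left hxy _)

end Cubic

theorem stmt6_general (a1 a2 a3 m1 m2 μ1 μ2 : ℤ)
    (h1 : m1 ∣ μ1 ^ 3 + a1 * μ1 ^ 2 + a2 * μ1 + a3)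
    (hlam : ∃ lam : ℤ,
      lam ≡ μ1 ^ 2 + a1 * μ1 + a2 [ZMOD m1] ∧
      lam ≡ -μ2 ^ 2 - μ1 * μ2 - a1 * μ2 [ZMOD m2])
    (p : ℤ)
    (hpm1 : p ∣ m1) (hpm2 : p ∣ m2) (hpμ : p ∣ μ1 - μ2) :
    p ∣ a1 ^ 2 * a2 ^ 2 - 4 * a2 ^ 3 - 4 * a1 ^ 3 * a3
        + 18 * a1 * a2 * a3 - 27 * a3 ^ 2 := by
  obtain ⟨lam, hl1, hl2⟩ := hlam
  let P : Cubic ℤ := ⟨1, a1, a2, a3⟩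
  have hF : p ∣ P.toPoly.eval μ1 := by
    simpa only [P, Cubic.eval_toPoly, one_mul] using hpm1.trans h1
  have hdiff : p ∣ μ1 ^ 2 + μ1 * μ2 + μ2 ^ 2 + a1 * (μ1 + μ2) + a2 :=
    ((hl2.of_dvd hpm2).symm.trans (hl1.of_dvd hpm1)).dvd.trans (dvd_of_eq (by ring))
  have hF' := Cubic.dvd_eval_derivative_of_dvd_sub (P := P) rfl hpμ hdiff
  exact (Cubic.dvd_discr_of_dvd_eval_of_dvd_eval_derivative rfl hF hF').trans
    (dvd_of_eq (by simp only [Cubic.discr, P]; ring))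

/-- for the monic cubic `F = X³ + a₁X² + a₂X + a₃` with
discriminant `D`, if `μ₁, μ₂` are roots mod `m₁, m₂`, the congruences for `λ`
are simultaneously solvable, and a prime `p` divides `gcd(m₁, m₂, μ₁ - μ₂)`,
then `p` divides `D`. -/
theorem stmt6 (a1 a2 a3 m1 m2 μ1 μ2 : ℤ) (hm1 : 0 < m1) (hm2 : 0 < m2)
    (h1 : m1 ∣ μ1 ^ 3 + a1 * μ1 ^ 2 + a2 * μ1 + a3)
    (h2 : m2 ∣ μ2 ^ 3 + a1 * μ2 ^ 2 + a2 * μ2 + a3)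
    (hlam : ∃ lam : ℤ,
      lam ≡ μ1 ^ 2 + a1 * μ1 + a2 [ZMOD m1] ∧
      lam ≡ -μ2 ^ 2 - μ1 * μ2 - a1 * μ2 [ZMOD m2])
    (p : ℤ) (hp : Prime p)
    (hpm1 : p ∣ m1) (hpm2 : p ∣ m2) (hpμ : p ∣ μ1 - μ2) :
    p ∣ a1 ^ 2 * a2 ^ 2 - 4 * a2 ^ 3 - 4 * a1 ^ 3 * a3
        + 18 * a1 * a2 * a3 - 27 * a3 ^ 2 :=
  stmt6_general a1 a2 a3 m1 m2 μ1 μ2 h1 hlam p hpm1 hpm2 hpμ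
end

section
/- Let F be monic of degree d over Z, α the class of X in R = Z[X]/(F). For roots μ mod m and ν mod n of F (i.e., m | F(μ), n | F(ν)), let I and J be the corresponding ideals, namely the Z-spans of {α^j − μ^j : 1 ≤ j ≤ d−1} ∪ {m} and {α^j − ν^j : 1 ≤ j ≤ d−1} ∪ {n} respectively. Then I ⊆ J if and only if n divides m and μ ≡ ν (mod n). -/
/-!
If `n ∣ m` and `μ ≡ ν (mod n)`, every generator of `I` lies in `J`, since
`α^j - μ^j = (α^j - ν^j) + (ν^j - μ^j)` and `n ∣ ν^j - μ^j`. Conversely, as `n ∣ F(ν)`, substituting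
`ν` for `α` gives a ring map `ℤ[X]/(F) → ℤ/nℤ` killing `J`; if `I ⊆ J` it kills `m` and `α - μ`
(a generator of `I` since `d ≥ 2`).
-/

open Polynomial

noncomputable def AdjoinRoot.reduceAtRoot (F : ℤ[X]) {n ν : ℤ} (hν : n ∣ F.eval ν) :
    AdjoinRoot F →+* ℤ ⧸ Ideal.span {n} :=
  AdjoinRoot.lift (Ideal.Quotient.mk _) (Ideal.Quotient.mk _ ν) <| by
    rwa [eval₂_at_apply, Ideal.Quotient.eq_zero_iff_dvd]

@[simp]
theorem AdjoinRoot.reduceAtRoot_intCast (F : ℤ[X]) {n ν : ℤ} (hν : n ∣ F.eval ν) (a : ℤ) :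
    AdjoinRoot.reduceAtRoot F hν a = Ideal.Quotient.mk _ a := by
  simp [AdjoinRoot.reduceAtRoot]

@[simp]
theorem AdjoinRoot.reduceAtRoot_root (F : ℤ[X]) {n ν : ℤ} (hν : n ∣ F.eval ν) :
    AdjoinRoot.reduceAtRoot F hν (AdjoinRoot.root F) = Ideal.Quotient.mk _ ν :=
  AdjoinRoot.lift_root _

namespace rootSpan

variable {F : ℤ[X]} {d : ℕ} {m n μ ν : ℤ}

theorem intCast_mem : (m : AdjoinRoot F) ∈ rootSpan F d m μ :=
  Submodule.subset_span (Or.inl rfl)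

theorem root_pow_sub_mem {j : ℕ} (hj : j ∈ Set.Ico 1 d) :
    AdjoinRoot.root F ^ j - (μ : AdjoinRoot F) ^ j ∈ rootSpan F d m μ :=
  Submodule.subset_span (Or.inr ⟨j, hj, rfl⟩)

theorem intCast_mem_of_dvd {a : ℤ} (h : n ∣ a) : (a : AdjoinRoot F) ∈ rootSpan F d n ν := by
  obtain ⟨k, rfl⟩ := h
  rw [Int.cast_mul, mul_comm, ← zsmul_eq_mul]
  exact Submodule.smul_mem _ k intCast_mem

theorem le_of_dvd_of_modEq (hnm : n ∣ m) (hμν : μ ≡ ν [ZMOD n]) :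
    rootSpan F d m μ ≤ rootSpan F d n ν := by
  refine Submodule.span_le.mpr ?_
  rintro x (rfl | ⟨j, hj, rfl⟩)
  · exact intCast_mem_of_dvd hnm
  · have hsplit : AdjoinRoot.root F ^ j - (μ : AdjoinRoot F) ^ j =
        (AdjoinRoot.root F ^ j - (ν : AdjoinRoot F) ^ j) + ((ν ^ j - μ ^ j : ℤ) : AdjoinRoot F) := by
      push_cast
      ring
    simp only [SetLike.mem_coe, hsplit]
    exact Submodule.add_mem _ (root_pow_sub_mem hj) (intCast_mem_of_dvd (hμν.pow j).dvd)

theorem le_ker_reduceAtRoot (hν : n ∣ F.eval ν) :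
    rootSpan F d n ν ≤ (RingHom.ker (AdjoinRoot.reduceAtRoot F hν)).restrictScalars ℤ := by
  refine Submodule.span_le.mpr ?_
  rintro x (rfl | ⟨j, -, rfl⟩)
  · change AdjoinRoot.reduceAtRoot F hν n = 0
    rw [AdjoinRoot.reduceAtRoot_intCast, Ideal.Quotient.eq_zero_iff_dvd]
  · simp

theorem dvd_and_modEq_of_le (hd : 1 < d) (hν : n ∣ F.eval ν)
    (h : rootSpan F d m μ ≤ rootSpan F d n ν) : n ∣ m ∧ μ ≡ ν [ZMOD n] := by
  have hker := h.trans (le_ker_reduceAtRoot (d := d) hν)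
  have hm : AdjoinRoot.reduceAtRoot F hν m = 0 := hker intCast_mem
  have hroot : AdjoinRoot.reduceAtRoot F hν (AdjoinRoot.root F - μ) = 0 :=
    hker (by simpa using root_pow_sub_mem (j := 1) ⟨le_rfl, hd⟩)
  rw [AdjoinRoot.reduceAtRoot_intCast, Ideal.Quotient.eq_zero_iff_dvd] at hm
  rw [map_sub, AdjoinRoot.reduceAtRoot_root, AdjoinRoot.reduceAtRoot_intCast, ← map_sub,
    Ideal.Quotient.eq_zero_iff_dvd] at hroot
  exact ⟨hm, Int.modEq_iff_dvd.mpr hroot⟩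

end rootSpan

theorem stmt9_general (d : ℕ) (hd : 2 ≤ d) (F : Polynomial ℤ)
    (m n μ ν : ℤ)
    (hν : n ∣ F.eval ν) :
    rootSpan F d m μ ≤ rootSpan F d n ν ↔ (n ∣ m ∧ μ ≡ ν [ZMOD n]) :=
  ⟨rootSpan.dvd_and_modEq_of_le hd hν, fun h => rootSpan.le_of_dvd_of_modEq h.1 h.2⟩

/-- for roots `μ mod m` and `ν mod n` of `F` with corresponding
ideals `I` and `J`, we have `I ⊆ J` iff `n ∣ m` and `μ ≡ ν (mod n)`. -/
theorem stmt9 (d : ℕ) (hd : 2 ≤ d) (F : Polynomial ℤ) (hF : F.Monic)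
    (hdeg : F.natDegree = d)
    (m n μ ν : ℤ) (hm : 0 < m) (hn : 0 < n)
    (hμ : m ∣ F.eval μ) (hν : n ∣ F.eval ν) :
    rootSpan F d m μ ≤ rootSpan F d n ν ↔ (n ∣ m ∧ μ ≡ ν [ZMOD n]) :=
  stmt9_general d hd F m n μ ν hν
end

section
/- Let F be monic of degree d over Z, α the class of X in R = Z[X]/(F). Let μ mod m and ν mod n be roots of F with gcd(m, n) = 1, with associated ideals I and J (Z-spans of {α^j − μ^j} ∪ {m} and {α^j − ν^j} ∪ {n}). Let μ̃ mod mn be the unique residue class with μ̃ ≡ μ (mod m) and μ̃ ≡ ν (mod n). Then F(μ̃) ≡ 0 (mod mn) and the product ideal IJ equals the Z-span of {α^j − μ̃^j : 1 ≤ j ≤ d−1} ∪ {mn}. -/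
open Polynomial AdjoinRoot

namespace Ideal

variable {R : Type*} [CommRing R]

theorem span_pair_eq_of_dvd_sub {a y z : R} (h : a ∣ y - z) :
    span {a, y} = span {a, z} := by
  obtain ⟨c, hc⟩ := h
  rw [show y = z + c * a by linear_combination hc, span_pair_add_mul_left]

theorem span_pair_mul_span_pair_of_isCoprime {a b : R} (y : R) (h : IsCoprime a b) :
    span {a, y} * span {b, y} = span {a * b, y} := by
  rw [span_pair_mul_span_pair]
  apply le_antisymm
  · simp only [span_le, Set.insert_subset_iff, Set.singleton_subset_iff, SetLike.mem_coe]
    have ha : a * b ∈ span {a * b, y} := subset_span (by simp)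
    have hy : y ∈ span {a * b, y} := subset_span (by simp)
    exact ⟨ha, mul_mem_left _ _ hy, mul_mem_right _ _ hy, mul_mem_left _ _ hy⟩
  · obtain ⟨u, v, huv⟩ := h
    have hay : a * y ∈ span {a * b, a * y, y * b, y * y} := subset_span (by simp)
    have hyb : y * b ∈ span {a * b, a * y, y * b, y * y} := subset_span (by simp)
    have hy : y = u * (a * y) + v * (y * b) := by linear_combination (-y) * huv
    simp only [span_le, Set.insert_subset_iff, Set.singleton_subset_iff, SetLike.mem_coe]
    refine ⟨subset_span (by simp), ?_⟩
    simpa only [← hy] using add_mem (mul_mem_left _ u hay) (mul_mem_left _ v hyb)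

end Ideal

theorem Polynomial.dvd_eval_of_modEq {F : ℤ[X]} {m a b : ℤ} (hab : a ≡ b [ZMOD m])
    (hb : m ∣ F.eval b) : m ∣ F.eval a :=
  (dvd_sub_left hb).mp ((Int.ModEq.dvd hab.symm).trans (sub_dvd_eval_sub a b F))

section rootSpan

variable {F : ℤ[X]} {d : ℕ} {m μ : ℤ}

theorem intCast_mem_rootSpan {k : ℤ} (hk : m ∣ k) : (k : AdjoinRoot F) ∈ rootSpan F d m μ := by
  obtain ⟨c, rfl⟩ := hk
  rw [Int.cast_mul, mul_comm, ← zsmul_eq_mul]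
  exact Submodule.smul_mem _ _ (Submodule.subset_span (Or.inl rfl))

theorem mk_sub_eval_mem_rootSpan {r : ℤ[X]} (hr : r.degree < d) :
    mk F r - ((r.eval μ : ℤ) : AdjoinRoot F) ∈ rootSpan F d m μ := by
  have hsum : mk F r - ((r.eval μ : ℤ) : AdjoinRoot F) =
      ∑ i ∈ r.support, r.coeff i • (root F ^ i - (μ : AdjoinRoot F) ^ i) := by
    rw [← aeval_eq, aeval_def, eval₂_eq_sum, eval_eq_sum, Polynomial.sum_def, Polynomial.sum_def]
    simp [smul_sub, zsmul_eq_mul]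
  rw [hsum]
  refine Submodule.sum_mem _ fun i hi => ?_
  rcases Nat.eq_zero_or_pos i with rfl | hi0
  · simp
  · refine Submodule.smul_mem _ _ (Submodule.subset_span (Or.inr ⟨i, ⟨hi0, ?_⟩, rfl⟩))
    exact_mod_cast (le_degree_of_mem_supp i hi).trans_lt hr

theorem mk_mem_rootSpan_of_dvd_eval (hF : F.Monic) (hdeg : F.natDegree = d)
    (hμ : m ∣ F.eval μ) {g : ℤ[X]} (hg : m ∣ g.eval μ) : mk F g ∈ rootSpan F d m μ := by
  have hmk : mk F g = mk F (g %ₘ F) := (mk_leftInverse hF (mk F g)).symm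
  have hr : m ∣ (g %ₘ F).eval μ := by
    rw [modByMonic_eq_sub_mul_div g F, eval_sub, eval_mul]
    exact dvd_sub hg (dvd_mul_of_dvd_left hμ _)
  have hrdeg : (g %ₘ F).degree < d := by
    rw [← hdeg, ← degree_eq_natDegree hF.ne_zero]
    exact degree_modByMonic_lt g hF
  rw [hmk, ← sub_add_cancel (mk F (g %ₘ F)) (((g %ₘ F).eval μ : ℤ) : AdjoinRoot F)]
  exact add_mem (mk_sub_eval_mem_rootSpan hrdeg) (intCast_mem_rootSpan hr)

theorem rootSpan_eq_restrictScalars_span_pair (hF : F.Monic) (hdeg : F.natDegree = d)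
    (hμ : m ∣ F.eval μ) :
    rootSpan F d m μ =
      (Ideal.span {(m : AdjoinRoot F), root F - (μ : AdjoinRoot F)}).restrictScalars ℤ := by
  apply le_antisymm
  · rw [rootSpan, Submodule.span_le]
    rintro x (rfl | ⟨j, -, rfl⟩)
    · exact Ideal.subset_span (by simp)
    · obtain ⟨c, hc⟩ := sub_dvd_pow_sub_pow (root F) (μ : AdjoinRoot F) j
      rw [SetLike.mem_coe, Submodule.restrictScalars_mem]
      simp only [hc]
      exact Ideal.mul_mem_right _ _ (Ideal.subset_span (by simp))
  · intro x hx
    obtain ⟨a, b, rfl⟩ := Ideal.mem_span_pair.1 ((Submodule.restrictScalars_mem ℤ _ _).1 hx)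
    obtain ⟨p, rfl⟩ := mk_surjective a
    obtain ⟨q, rfl⟩ := mk_surjective b
    have hx : mk F p * m + mk F q * (root F - μ) = mk F (p * C m + q * (X - C μ)) := by simp
    rw [hx]
    exact mk_mem_rootSpan_of_dvd_eval hF hdeg hμ (by simp)

theorem rootSpan_eq_restrictScalars_span_pair_of_modEq (hF : F.Monic)
    (hdeg : F.natDegree = d) (hμ : m ∣ F.eval μ) {μ' : ℤ} (h : μ' ≡ μ [ZMOD m]) :
    rootSpan F d m μ =
      (Ideal.span {(m : AdjoinRoot F), root F - (μ' : AdjoinRoot F)}).restrictScalars ℤ := by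
  rw [rootSpan_eq_restrictScalars_span_pair hF hdeg hμ, Ideal.span_pair_eq_of_dvd_sub]
  simpa using map_dvd (Int.castRingHom (AdjoinRoot F)) h.symm.dvd

end rootSpan

theorem stmt10_general (d : ℕ) (F : Polynomial ℤ) (hF : F.Monic) (hdeg : F.natDegree = d)
    (m n μ ν : ℤ)
    (hμ : m ∣ F.eval μ) (hν : n ∣ F.eval ν)
    (hcop : IsCoprime m n)
    (μt : ℤ) (hμt1 : μt ≡ μ [ZMOD m]) (hμt2 : μt ≡ ν [ZMOD n]) :
    (m * n) ∣ F.eval μt ∧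
      rootSpan F d m μ * rootSpan F d n ν = rootSpan F d (m * n) μt := by
  have hmn : m * n ∣ F.eval μt :=
    hcop.mul_dvd (dvd_eval_of_modEq hμt1 hμ) (dvd_eval_of_modEq hμt2 hν)
  refine ⟨hmn, ?_⟩
  rw [rootSpan_eq_restrictScalars_span_pair_of_modEq hF hdeg hμ hμt1,
    rootSpan_eq_restrictScalars_span_pair_of_modEq hF hdeg hν hμt2,
    rootSpan_eq_restrictScalars_span_pair hF hdeg hmn, ← Ideal.restrictScalars_mul,
    Ideal.span_pair_mul_span_pair_of_isCoprime _ hcop.intCast, Int.cast_mul]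

/-- for roots `μ mod m` and `ν mod n` of `F` with `gcd(m,n) = 1`
and CRT lift `μ̃ mod mn`, we have `F(μ̃) ≡ 0 (mod mn)` and the product of the
associated ideals is the ideal associated to `μ̃ mod mn`. -/
theorem stmt10 (d : ℕ) (F : Polynomial ℤ) (hF : F.Monic) (hdeg : F.natDegree = d)
    (m n μ ν : ℤ) (hm : 0 < m) (hn : 0 < n)
    (hμ : m ∣ F.eval μ) (hν : n ∣ F.eval ν)
    (hcop : IsCoprime m n)
    (μt : ℤ) (hμt1 : μt ≡ μ [ZMOD m]) (hμt2 : μt ≡ ν [ZMOD n]) :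
    (m * n) ∣ F.eval μt ∧
      rootSpan F d m μ * rootSpan F d n ν = rootSpan F d (m * n) μt :=
  stmt10_general d F hF hdeg m n μ ν hμ hν hcop μt hμt1 hμt2
end

section
/- Let a, b, c, a', b', c' be integers with gcd(a,b,c) = 1, gcd(a',b',c') = 1, and a·a' + b·b' + c·c' = 0. Then there exists γ ∈ SL(3, Z) such that the bottom row of γ is (a', b', c') and the first column of γ^{−1} is (a, b, c)^T. Moreover γ is unique up to left multiplication by upper-triangular unipotent integer matrices. -/
/-!
Write `u = (a, b, c)` and `v = (a', b', c')`. By Bézout there are `x, p` with `x ⬝ u = 1` and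
`p ⬝ v = 1`. The matrix `γ` with rows `x, p × u, v` satisfies `γ u = e₀`, because `u` is
orthogonal to `p × u` and to `v`; its determinant is the triple product
`x ⬝ ((p × u) × v) = x ⬝ ((p ⬝ v) u - (u ⬝ v) p) = x ⬝ u = 1`.
The condition on `γ⁻¹` says exactly `γ u = e₀`, so for another solution `δ` the matrix
`δ γ⁻¹` fixes `e₀` and has bottom row `e₂`; having determinant `1`, it is upper unipotent.
-/

open Matrix

theorem Int.exists_dotProduct_eq_one_of_gcd_gcd_eq_one {a b c : ℤ}
    (h : Int.gcd (Int.gcd a b) c = 1) : ∃ x : Fin 3 → ℤ, x ⬝ᵥ ![a, b, c] = 1 := by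
  obtain ⟨s, t, hst⟩ := Int.isCoprime_iff_gcd_eq_one.2 h
  refine ⟨![s * Int.gcdA a b, s * Int.gcdB a b, t], ?_⟩
  rw [vec3_dotProduct', ← hst, Int.gcd_eq_gcd_ab a b]
  ring

theorem Matrix.vec3_eq_iff {α : Type*} {f : Fin 3 → α} {a b c : α} :
    f = ![a, b, c] ↔ f 0 = a ∧ f 1 = b ∧ f 2 = c := by
  simp [funext_iff, Fin.forall_fin_succ]

section CommRing

variable {R : Type*} [CommRing R]

theorem Matrix.exists_det_eq_one_row_eq_mulVec_eq_single {u v x p : Fin 3 → R}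
    (hx : x ⬝ᵥ u = 1) (hp : p ⬝ᵥ v = 1) (hvu : v ⬝ᵥ u = 0) :
    ∃ γ : Matrix (Fin 3) (Fin 3) R, γ.det = 1 ∧ γ 2 = v ∧ γ *ᵥ u = Pi.single 0 1 := by
  have hcross : p ⨯₃ u ⨯₃ v = u := by
    rw [cross_cross_eq_smul_sub_smul, hp, dotProduct_comm, hvu]
    simp
  refine ⟨![x, p ⨯₃ u, v], ?_, rfl, ?_⟩
  · rw [← triple_product_eq_det, hcross, hx]
  · ext i
    fin_cases i
    · simp [mulVec, hx]
    · simp [mulVec, dotProduct_comm]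
    · simp [mulVec, hvu]

theorem Matrix.fin_three_upper_unipotent_of_det_eq_one {U : Matrix (Fin 3) (Fin 3) R}
    (hdet : U.det = 1) (hcol : U *ᵥ Pi.single 0 1 = Pi.single 0 1) (hrow : U 2 = Pi.single 2 1) :
    U 0 0 = 1 ∧ U 1 1 = 1 ∧ U 2 2 = 1 ∧ U 1 0 = 0 ∧ U 2 0 = 0 ∧ U 2 1 = 0 := by
  rw [mulVec_single_one] at hcol
  have h00 : U 0 0 = 1 := by simpa using congrFun hcol 0
  have h10 : U 1 0 = 0 := by simpa using congrFun hcol 1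
  have h20 : U 2 0 = 0 := by simpa using congrFun hcol 2
  have h21 : U 2 1 = 0 := by simpa using congrFun hrow 1
  have h22 : U 2 2 = 1 := by simpa using congrFun hrow 2
  rw [det_fin_three, h00, h10, h20, h21, h22] at hdet
  exact ⟨h00, by linear_combination hdet, h22, h10, h20, h21⟩

variable {n : Type*} [Fintype n] [DecidableEq n]

theorem Matrix.col_nonsing_inv_eq_iff {A : Matrix n n R} (hA : IsUnit A.det) (j : n)
    (u : n → R) : A⁻¹.col j = u ↔ A *ᵥ u = Pi.single j 1 := by
  rw [← mulVec_single_one]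
  constructor
  · rintro rfl
    rw [mulVec_mulVec, mul_nonsing_inv A hA, one_mulVec]
  · rintro h
    rw [← h, mulVec_mulVec, nonsing_inv_mul A hA, one_mulVec]

theorem Matrix.mul_nonsing_inv_mulVec_mulVec {A : Matrix n n R} (hA : IsUnit A.det)
    (B : Matrix n n R) (w : n → R) : (B * A⁻¹) *ᵥ (A *ᵥ w) = B *ᵥ w := by
  rw [mulVec_mulVec, nonsing_inv_mul_cancel_right A B hA]

theorem Matrix.mul_nonsing_inv_row_of_row_eq {A B : Matrix n n R} (hA : IsUnit A.det) {i : n}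
    (h : B i = A i) : (B * A⁻¹) i = Pi.single i 1 := by
  rw [mul_apply_eq_vecMul, h, ← mul_apply_eq_vecMul, mul_nonsing_inv A hA]
  ext j
  simp [one_apply, Pi.single_apply, eq_comm]

end CommRing

/-- given Plücker coordinates `a, b, c, a', b', c'` with
`gcd(a,b,c) = gcd(a',b',c') = 1` and `aa' + bb' + cc' = 0`, there is a matrix
`γ ∈ SL(3,ℤ)` whose bottom row is `(a', b', c')` and whose inverse has first
column `(a, b, c)ᵀ`, unique up to left multiplication by upper-triangular
unipotent integer matrices. -/
theorem stmt12 (a b c a' b' c' : ℤ)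
    (h1 : Int.gcd (Int.gcd a b) c = 1)
    (h2 : Int.gcd (Int.gcd a' b') c' = 1)
    (h3 : a * a' + b * b' + c * c' = 0) :
    ∃ γ : Matrix (Fin 3) (Fin 3) ℤ, γ.det = 1 ∧
      (γ 2 0 = a' ∧ γ 2 1 = b' ∧ γ 2 2 = c') ∧
      (γ⁻¹ 0 0 = a ∧ γ⁻¹ 1 0 = b ∧ γ⁻¹ 2 0 = c) ∧
      ∀ δ : Matrix (Fin 3) (Fin 3) ℤ, δ.det = 1 →
        (δ 2 0 = a' ∧ δ 2 1 = b' ∧ δ 2 2 = c') →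
        (δ⁻¹ 0 0 = a ∧ δ⁻¹ 1 0 = b ∧ δ⁻¹ 2 0 = c) →
        ∃ u : Matrix (Fin 3) (Fin 3) ℤ,
          (u 0 0 = 1 ∧ u 1 1 = 1 ∧ u 2 2 = 1 ∧
            u 1 0 = 0 ∧ u 2 0 = 0 ∧ u 2 1 = 0) ∧
          δ = u * γ := by
  obtain ⟨x, hx⟩ := Int.exists_dotProduct_eq_one_of_gcd_gcd_eq_one h1
  obtain ⟨p, hp⟩ := Int.exists_dotProduct_eq_one_of_gcd_gcd_eq_one h2
  have hvu : ![a', b', c'] ⬝ᵥ ![a, b, c] = 0 := by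
    rw [vec3_dotProduct']
    linear_combination h3
  obtain ⟨γ, hγdet, hγrow, hγcol⟩ := exists_det_eq_one_row_eq_mulVec_eq_single hx hp hvu
  have hγ : IsUnit γ.det := by simp [hγdet]
  refine ⟨γ, hγdet, vec3_eq_iff.1 hγrow, vec3_eq_iff.1 ((col_nonsing_inv_eq_iff hγ 0 _).2 hγcol),
    fun δ hδdet hδrow hδcol => ⟨δ * γ⁻¹, ?_, (nonsing_inv_mul_cancel_right γ δ hγ).symm⟩⟩
  have hδ : IsUnit δ.det := by simp [hδdet]
  rw [← vec3_eq_iff, ← hγrow] at hδrow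
  replace hδcol := (col_nonsing_inv_eq_iff hδ 0 _).1 (vec3_eq_iff.2 hδcol)
  refine fin_three_upper_unipotent_of_det_eq_one ?_ ?_ (mul_nonsing_inv_row_of_row_eq hγ hδrow)
  · simp [det_nonsing_inv, hγdet, hδdet]
  · simpa only [hγcol, hδcol] using mul_nonsing_inv_mulVec_mulVec hγ δ ![a, b, c]
end
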